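/- Let H be an intersecting r-partite hypergraph with τ(H) = r, minimum degree at least 2, h lines, maximum degree Δ ≥ 4, and |V(H)| = r² + ε vertices (ε ≥ 0). Then h² − (Δr + Δ/2 + 2r)h + 3r²Δ ≤ −3Δε. -/

import Mathlib

/-- A set of vertices `C` is a cover of the hypergraph `H` (a finite set of lines)
if every line contains a vertex of `C`. -/
def IsCover {α : Type*} (H : Finset (Finset α)) (C : Finset α) : Prop :=
  ∀ e ∈ H, ∃ v ∈ e, v ∈ C

/-- The covering number: the minimum size of a cover. -/
noncomputable def coverNumber {α : Type*} (H : Finset (Finset α)) : ℕ :=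
  sInf {n | ∃ C : Finset α, IsCover H C ∧ C.card = n}

/-- A matching is a set of pairwise disjoint lines of `H`. -/
def IsMatching {α : Type*} (H M : Finset (Finset α)) : Prop :=
  M ⊆ H ∧ ∀ e ∈ M, ∀ f ∈ M, e ≠ f → Disjoint e f

/-- The matching number: the maximum size of a matching. -/
noncomputable def matchingNumber {α : Type*} (H : Finset (Finset α)) : ℕ :=
  sSup {n | ∃ M : Finset (Finset α), IsMatching H M ∧ M.card = n}

/-- An `r`-partite hypergraph on vertex set `Fin r × V` (side `i` consists of the
vertices with first coordinate `i`): every line has exactly one vertex in each side. -/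
def Rpartite {r : ℕ} {V : Type*} (H : Finset (Finset (Fin r × V))) : Prop :=
  ∀ e ∈ H, ∀ i : Fin r, ∃! v : Fin r × V, v ∈ e ∧ v.1 = i

/-- `H` is intersecting: every two lines share at least one vertex. -/
def Intersecting {α : Type*} (H : Finset (Finset α)) : Prop :=
  ∀ e ∈ H, ∀ f ∈ H, ∃ v, v ∈ e ∧ v ∈ f

/-- `H` is linear intersecting: every two distinct lines meet in exactly one vertex. -/
def LinearIntersecting {α : Type*} (H : Finset (Finset α)) : Prop :=
  ∀ e ∈ H, ∀ f ∈ H, e ≠ f → ∃! v, v ∈ e ∧ v ∈ f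

/-- The vertices of `H` (i.e. the vertices of positive degree). -/
def vertexSet {α : Type*} [DecidableEq α] (H : Finset (Finset α)) : Finset α :=
  H.sup id

/-- The degree of a vertex: the number of lines containing it. -/
def degree {α : Type*} [DecidableEq α] (H : Finset (Finset α)) (v : α) : ℕ :=
  (H.filter (fun e => v ∈ e)).card

/-- The maximum degree of `H`. -/
def maxDegree {α : Type*} [DecidableEq α] (H : Finset (Finset α)) : ℕ :=
  (vertexSet H).sup (degree H)

/-- Side `i` of an `r`-partite hypergraph: the vertices of `H` with first coordinate `i`. -/
def side {r : ℕ} {V : Type*} [DecidableEq V] (H : Finset (Finset (Fin r × V))) (i : Fin r) :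
    Finset (Fin r × V) :=
  (vertexSet H).filter (fun v => v.1 = i)

/-!
Count ordered pairs of distinct lines through their common vertices: `h² - h ≤ ∑ (d² - d)`.
For `2 ≤ d ≤ Δ` one has `d² - d ≤ (Δ + 2) d - 3Δ`, except for an excess `Δ - 2` at `d = 2`.
Summing, `∑ d = r h` and `|V| = r² + ε`; and since `τ = r` forbids two vertices of degree two
on a line, there are at most `h / 2` such vertices.
-/

open Finset

section Hypergraph

variable {α : Type*} {H : Finset (Finset α)}

lemma coverNumber_le_card {C : Finset α} (hC : IsCover H C) : coverNumber H ≤ #C :=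
  Nat.sInf_le ⟨C, hC, rfl⟩

variable [DecidableEq α]

lemma subset_vertexSet {e : Finset α} (he : e ∈ H) : e ⊆ vertexSet H :=
  le_sup (f := id) he

lemma degree_le_maxDegree {v : α} (hv : v ∈ vertexSet H) : degree H v ≤ maxDegree H :=
  le_sup hv

lemma exists_ne_mem_of_two_le_degree {v : α} (hv : 2 ≤ degree H v) :
    ∃ e ∈ H, ∃ f ∈ H, v ∈ e ∧ v ∈ f ∧ e ≠ f := by
  obtain ⟨e, he, f, hf, hef⟩ := one_lt_card.mp (hv : 2 ≤ #{e ∈ H | v ∈ e})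
  rw [mem_filter] at he hf
  exact ⟨e, he.1, f, hf.1, he.2, hf.2, hef⟩

lemma exists_eq_of_degree_eq_two {v : α} {e : Finset α} (he : e ∈ H) (hv : v ∈ e)
    (hd : degree H v = 2) : ∃ f ∈ H, v ∈ f ∧ ∀ ℓ ∈ H, v ∈ ℓ → ℓ ≠ e → ℓ = f := by
  have hmem : e ∈ {ℓ ∈ H | v ∈ ℓ} := mem_filter.mpr ⟨he, hv⟩
  obtain ⟨f, hf⟩ := card_eq_one.mp
    (by rw [card_erase_of_mem hmem]; exact congrArg (· - 1) hd : #({ℓ ∈ H | v ∈ ℓ}.erase e) = 1)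
  have hfH := mem_filter.mp (mem_erase.mp (hf ▸ mem_singleton_self f)).2
  refine ⟨f, hfH.1, hfH.2, fun ℓ hℓ hvℓ hℓe => ?_⟩
  have : ℓ ∈ {ℓ ∈ H | v ∈ ℓ}.erase e := mem_erase.mpr ⟨hℓe, mem_filter.mpr ⟨hℓ, hvℓ⟩⟩
  rwa [hf, mem_singleton] at this

lemma sum_degree_eq_sum_card_inter (H : Finset (Finset α)) (S : Finset α) :
    ∑ v ∈ S, degree H v = ∑ e ∈ H, #(S ∩ e) := by
  simp_rw [degree, ← filter_mem_eq_inter, card_eq_sum_ones, sum_filter]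
  exact sum_comm

lemma Intersecting.card_sq_sub_card_le (hint : Intersecting H) :
    (#H : ℝ) ^ 2 - #H ≤ ∑ v ∈ vertexSet H, ((degree H v : ℝ) ^ 2 - degree H v) := by
  have hpairs : H.offDiag ⊆ (vertexSet H).biUnion fun v => {e ∈ H | v ∈ e}.offDiag := by
    intro p hp
    rw [mem_offDiag] at hp
    obtain ⟨z, hz1, hz2⟩ := hint p.1 hp.1 p.2 hp.2.1
    exact mem_biUnion.mpr ⟨z, subset_vertexSet hp.1 hz1,
      mem_offDiag.mpr ⟨mem_filter.mpr ⟨hp.1, hz1⟩, mem_filter.mpr ⟨hp.2.1, hz2⟩, hp.2.2⟩⟩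
  have hcount : #H * #H - #H ≤ ∑ v ∈ vertexSet H, (degree H v * degree H v - degree H v) := by
    rw [← offDiag_card]
    exact (card_le_card hpairs).trans
      (card_biUnion_le.trans_eq (sum_congr rfl fun _ _ => offDiag_card _))
  have hcast (n : ℕ) : ((n * n - n : ℕ) : ℝ) = (n : ℝ) ^ 2 - n := by
    rw [Nat.cast_sub (Nat.le_mul_self n)]; push_cast; ring
  simpa only [hcast, Nat.cast_sum] using (Nat.cast_le (α := ℝ)).mpr hcount

end Hypergraph

section Rpartite

variable {r : ℕ} {V : Type*} {H : Finset (Finset (Fin r × V))}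

lemma Rpartite.card_eq (hpart : Rpartite H) {e : Finset (Fin r × V)} (he : e ∈ H) : #e = r := by
  have : #e = #(univ : Finset (Fin r)) := by
    refine card_bij (fun a _ => a.1) (fun _ _ => mem_univ _) (fun a ha b hb hab => ?_)
      fun i _ => ?_
    · obtain ⟨v, -, huniq⟩ := hpart e he a.1
      rw [huniq a ⟨ha, rfl⟩, huniq b ⟨hb, hab.symm⟩]
    · obtain ⟨v, ⟨hv, hvi⟩, -⟩ := hpart e he i
      exact ⟨v, hv, hvi⟩
  simpa using this

lemma Rpartite.eq_of_fst_eq (hpart : Rpartite H) {e : Finset (Fin r × V)} (he : e ∈ H)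
    {a b : Fin r × V} (ha : a ∈ e) (hb : b ∈ e) (hab : a.1 = b.1) : a = b := by
  obtain ⟨v, -, huniq⟩ := hpart e he a.1
  rw [huniq a ⟨ha, rfl⟩, huniq b ⟨hb, hab.symm⟩]

variable [DecidableEq V]

lemma Rpartite.eq_of_le_card_inter (hpart : Rpartite H) {e f : Finset (Fin r × V)}
    (he : e ∈ H) (hf : f ∈ H) (hr : r ≤ #(e ∩ f)) : e = f := by
  have hee : e ∩ f = e :=
    eq_of_subset_of_card_le inter_subset_left (by rw [hpart.card_eq he]; exact hr)
  have hff : e ∩ f = f :=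
    eq_of_subset_of_card_le inter_subset_right (by rw [hpart.card_eq hf]; exact hr)
  exact hee.symm.trans hff

lemma Rpartite.sum_degree (hpart : Rpartite H) :
    ∑ v ∈ vertexSet H, degree H v = r * #H := by
  rw [sum_degree_eq_sum_card_inter, sum_congr rfl fun e he => by
    rw [inter_eq_right.mpr (subset_vertexSet he), hpart.card_eq he]]
  simp [mul_comm]

lemma Rpartite.three_le (hpart : Rpartite H) (hint : Intersecting H) (htau : coverNumber H = r)
    {v : Fin r × V} (hv : 2 ≤ degree H v) : 3 ≤ r := by
  obtain ⟨e₁, he₁, e₂, he₂, hv₁, hv₂, hne⟩ := exists_ne_mem_of_two_le_degree hv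
  by_contra! hr
  replace hr : r ≤ 2 := Nat.le_of_lt_succ hr
  by_cases hf : ∃ f ∈ H, v ∉ f
  · -- for `r ≤ 2`, the points where `f` meets `e₁` and `e₂` lie on the same side, so coincide
    obtain ⟨f, hf, hvf⟩ := hf
    obtain ⟨w₁, hw₁, hw₁f⟩ := hint e₁ he₁ f hf
    obtain ⟨w₂, hw₂, hw₂f⟩ := hint e₂ he₂ f hf
    have hside₁ : w₁.1 ≠ v.1 := fun h => hvf (hpart.eq_of_fst_eq he₁ hw₁ hv₁ h ▸ hw₁f)
    have hside₂ : w₂.1 ≠ v.1 := fun h => hvf (hpart.eq_of_fst_eq he₂ hw₂ hv₂ h ▸ hw₂f)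
    have hw : w₁ = w₂ := hpart.eq_of_fst_eq hf hw₁f hw₂f <| by
      have := Fin.val_ne_of_ne hside₁; have := Fin.val_ne_of_ne hside₂
      ext; omega
    subst hw
    refine hne (hpart.eq_of_le_card_inter he₁ he₂ (hr.trans ?_))
    rw [← card_pair fun h : v = w₁ => hvf (h ▸ hw₁f)]
    exact card_le_card (insert_subset (mem_inter.mpr ⟨hv₁, hv₂⟩) (by simp [hw₁, hw₂]))
  · push Not at hf
    have hτ : r ≤ 1 :=
      htau ▸ coverNumber_le_card (C := {v}) fun e he => ⟨v, hf e he, mem_singleton_self v⟩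
    refine hne (hpart.eq_of_le_card_inter he₁ he₂ (hτ.trans ?_))
    exact card_pos.mpr ⟨v, mem_inter.mpr ⟨hv₁, hv₂⟩⟩

/-- If `u, w ∈ e` both had degree two, with other lines `f ∋ u` and `g ∋ w`, then a point of
`f ∩ g` together with `e \ {u, w}` would be a cover of size `r - 1`. -/
lemma Rpartite.card_filter_degree_eq_two_le_one (hpart : Rpartite H) (hint : Intersecting H)
    (htau : coverNumber H = r) (hr : 3 ≤ r) {e : Finset (Fin r × V)} (he : e ∈ H) :
    #{v ∈ e | degree H v = 2} ≤ 1 := by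
  by_contra! hcon
  obtain ⟨u, hu, w, hw, huw⟩ := one_lt_card.mp hcon
  rw [mem_filter] at hu hw
  obtain ⟨f, hfH, huf, hf⟩ := exists_eq_of_degree_eq_two he hu.1 hu.2
  obtain ⟨g, hgH, hwg, hg⟩ := exists_eq_of_degree_eq_two he hw.1 hw.2
  obtain ⟨x, hxf, hxg⟩ := hint f hfH g hgH
  have hrest : #(e \ {u, w}) = r - 2 := by
    rw [card_sdiff_of_subset (insert_subset hu.1 (singleton_subset_iff.mpr hw.1)),
      card_pair huw, hpart.card_eq he]
  have hcover : IsCover H (insert x (e \ {u, w})) := by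
    intro ℓ hℓ
    by_cases hℓe : ℓ = e
    · obtain ⟨y, hy⟩ : (e \ {u, w}).Nonempty := card_pos.mp (by omega)
      exact ⟨y, hℓe ▸ (mem_sdiff.mp hy).1, mem_insert_of_mem hy⟩
    obtain ⟨z, hze, hzℓ⟩ := hint e he ℓ hℓ
    by_cases hzu : z = u
    · exact ⟨x, hf ℓ hℓ (hzu ▸ hzℓ) hℓe ▸ hxf, mem_insert_self _ _⟩
    by_cases hzw : z = w
    · exact ⟨x, hg ℓ hℓ (hzw ▸ hzℓ) hℓe ▸ hxg, mem_insert_self _ _⟩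
    exact ⟨z, hzℓ, mem_insert_of_mem (mem_sdiff.mpr ⟨hze, by simp [hzu, hzw]⟩)⟩
  have := (coverNumber_le_card hcover).trans (card_insert_le _ _)
  omega

lemma Rpartite.two_mul_card_degree_eq_two_le (hpart : Rpartite H) (hint : Intersecting H)
    (htau : coverNumber H = r) (hr : 3 ≤ r) :
    2 * #{v ∈ vertexSet H | degree H v = 2} ≤ #H := by
  set T := {v ∈ vertexSet H | degree H v = 2}
  calc 2 * #T = ∑ v ∈ T, degree H v := by
        rw [sum_congr rfl fun v hv => (mem_filter.mp hv).2, sum_const, smul_eq_mul, mul_comm]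
    _ = ∑ e ∈ H, #(T ∩ e) := sum_degree_eq_sum_card_inter H T
    _ ≤ ∑ _e ∈ H, 1 := sum_le_sum fun e he =>
        (card_le_card fun v hv => mem_filter.mpr ⟨(mem_inter.mp hv).2,
          (mem_filter.mp (mem_inter.mp hv).1).2⟩).trans
        (hpart.card_filter_degree_eq_two_le_one hint htau hr he)
    _ = #H := by simp

end Rpartite

-- `(d - 3)(d - D) ≤ 0` for `3 ≤ d ≤ D`, and the correction term gives equality at `d = 2`
lemma sq_sub_le_of_two_le_of_le {d D : ℕ} (h2 : 2 ≤ d) (hD : d ≤ D) :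
    (d : ℝ) ^ 2 - d ≤ (D + 2) * d - 3 * D + if d = 2 then (D : ℝ) - 2 else 0 := by
  split_ifs with hd
  · subst hd; push_cast; linarith
  · have h3 : (3 : ℝ) ≤ d := by exact_mod_cast (by omega : 3 ≤ d)
    have hdD : (d : ℝ) ≤ D := by exact_mod_cast hD
    nlinarith [mul_nonneg (sub_nonneg.mpr h3) (sub_nonneg.mpr hdD)]

lemma sum_sq_sub_le {ι : Type*} (s : Finset ι) (f : ι → ℕ) {D : ℕ} (h2 : ∀ i ∈ s, 2 ≤ f i)
    (hD : ∀ i ∈ s, f i ≤ D) :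
    ∑ i ∈ s, ((f i : ℝ) ^ 2 - f i)
      ≤ (D + 2) * ∑ i ∈ s, (f i : ℝ) - 3 * D * #s + (D - 2) * #{i ∈ s | f i = 2} := by
  calc ∑ i ∈ s, ((f i : ℝ) ^ 2 - f i)
      ≤ ∑ i ∈ s, ((D + 2) * (f i : ℝ) - 3 * D + if f i = 2 then (D : ℝ) - 2 else 0) :=
        sum_le_sum fun i hi => sq_sub_le_of_two_le_of_le (h2 i hi) (hD i hi)
    _ = _ := by
        rw [sum_add_distrib, sum_sub_distrib, ← mul_sum, sum_const, ← sum_filter, sum_const]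
        simp only [nsmul_eq_mul]
        ring

/-- The quadratic inequality: for an intersecting `r`-partite hypergraph with
`τ = r`, minimum degree at least `2`, `h` lines, maximum degree `Δ ≥ 4` and
`r² + ε` vertices, we have `h² - (Δr + Δ/2 + 2r)h + 3r²Δ ≤ -3Δε`. -/
theorem quadratic_in_h {r ε : ℕ} {V : Type*} [DecidableEq V]
    (H : Finset (Finset (Fin r × V)))
    (hpart : Rpartite H) (hint : Intersecting H) (htau : coverNumber H = r)
    (hmindeg : ∀ v ∈ vertexSet H, 2 ≤ degree H v)
    (hΔ : 4 ≤ maxDegree H)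
    (hcard : (vertexSet H).card = r ^ 2 + ε) :
    (H.card : ℝ)^2
        - ((maxDegree H : ℝ) * r + (maxDegree H : ℝ) / 2 + 2 * r) * (H.card : ℝ)
        + 3 * (r : ℝ)^2 * (maxDegree H : ℝ)
      ≤ -(3 * (maxDegree H : ℝ) * (ε : ℝ)) := by
  obtain ⟨v, -, hv⟩ := (Finset.le_sup_iff (by norm_num : ⊥ < 4)).mp hΔ
  have hr : 3 ≤ r := hpart.three_le hint htau (by omega : 2 ≤ degree H v)
  have hpairs := hint.card_sq_sub_card_le
  have hdeg := sum_sq_sub_le (vertexSet H) (degree H) hmindeg fun _ => degree_le_maxDegree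
  have hT : 2 * (#{v ∈ vertexSet H | degree H v = 2} : ℝ) ≤ #H := by
    exact_mod_cast hpart.two_mul_card_degree_eq_two_le hint htau hr
  have hsum : ∑ v ∈ vertexSet H, (degree H v : ℝ) = r * #H := by
    exact_mod_cast hpart.sum_degree
  have hD : (4 : ℝ) ≤ maxDegree H := by exact_mod_cast hΔ
  rw [hsum, hcard] at hdeg
  push_cast at hdeg
  linarith [mul_le_mul_of_nonneg_left hT (by linarith : (0 : ℝ) ≤ maxDegree H - 2)]
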